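/- arXiv:1309.3195 — 3 statements merged into one kernel-verified Lean document; each statement's English description precedes it below -/
import Mathlib

section
/- (Proposition 1, comparison part.) Let k ≥ 2, a_1,…,a_k ≥ 0, let d be an integer with 2 ≤ d ≤ k and a_d > 0, let σ ∈ (0,1], and let c > 0. Define P(x) = ∑_{j=1}^{k} j·a_j·x^{j−1} and Q_σ(x) = P(x) + σ·a_d − σ·d·a_d·x^{d−1}. Define sequences y₀ = z₀ = 1, y_{t+1} = exp(−c·P(1 − y_t)), z_{t+1} = exp(−c·Q_σ(1 − z_t)). If d·(1 − y_t)^{d−1} < 1 for every t ≥ 0, then z_t < y_t for every t ≥ 1. -/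
/-!
Write `Q_σ(x) = σ·a_d + ∑ j·b_j·x^{j−1}` with `b_d = (1 − σ)·a_d` and `b_j = a_j` otherwise: all
coefficients are nonnegative, so `Q_σ` is monotone on `[0, ∞)`. At the points `x = 1 − y_t` the
hypothesis `d·x^{d−1} < 1` gives `Q_σ(x) − P(x) = σ·a_d·(1 − d·x^{d−1}) > 0`. By induction
`z_t ≤ y_t ≤ 1`, whence `Q_σ(1 − z_t) ≥ Q_σ(1 − y_t) > P(1 − y_t)` and `z_{t+1} < y_{t+1}`.
-/

open Finset Set Real

lemma monotoneOn_sum_mul_pow {ι : Type*} (s : Finset ι) {b : ι → ℝ} (n : ι → ℕ)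
    (hb : ∀ i ∈ s, 0 ≤ b i) : MonotoneOn (fun x : ℝ => ∑ i ∈ s, b i * x ^ n i) (Ici 0) :=
  fun _ hx _ _ hxu => sum_le_sum fun i hi =>
    mul_le_mul_of_nonneg_left (pow_le_pow_left₀ hx hxu _) (hb i hi)

lemma monotoneOn_sum_sub_spike (s : Finset ℕ) {a : ℕ → ℝ} (ha : ∀ j ∈ s, 0 ≤ a j)
    {d : ℕ} (hd : d ∈ s) {τ : ℝ} (hτ : τ ≤ a d) :
    MonotoneOn (fun x : ℝ => ∑ j ∈ s, (j : ℝ) * a j * x ^ (j - 1) - d * τ * x ^ (d - 1))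
      (Ici 0) := by
  have hsplit : ∀ x : ℝ, ∑ j ∈ s, (j : ℝ) * a j * x ^ (j - 1) - d * τ * x ^ (d - 1) =
      ∑ j ∈ s, (j * (a j - if j = d then τ else 0)) * x ^ (j - 1) := by
    intro x
    simp only [mul_sub, sub_mul, sum_sub_distrib, mul_ite, mul_zero, ite_mul, zero_mul,
      sum_ite_eq', if_pos hd]
  simp only [hsplit]
  refine monotoneOn_sum_mul_pow s _ fun j hj => mul_nonneg j.cast_nonneg ?_
  split_ifs with h
  · subst h; linarith
  · simpa using ha j hj

lemma iterate_le_one {c : ℝ} (hc : 0 ≤ c) {f : ℝ → ℝ} (hf : ∀ x, 0 ≤ x → 0 ≤ f x)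
    {y : ℕ → ℝ} (hy0 : y 0 ≤ 1) (hy : ∀ t, y (t + 1) = exp (-(c * f (1 - y t)))) :
    ∀ t, y t ≤ 1
  | 0 => hy0
  | t + 1 => by
    rw [hy, exp_le_one_iff, neg_nonpos]
    exact mul_nonneg hc (hf _ (sub_nonneg.mpr (iterate_le_one hc hf hy0 hy t)))

lemma iterate_lt_iterate {c : ℝ} (hc : 0 < c) {f g : ℝ → ℝ} (hg : MonotoneOn g (Ici 0))
    {y z : ℕ → ℝ} (hzy0 : z 0 ≤ y 0) (hy1 : ∀ t, y t ≤ 1)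
    (hy : ∀ t, y (t + 1) = exp (-(c * f (1 - y t))))
    (hz : ∀ t, z (t + 1) = exp (-(c * g (1 - z t))))
    (hgap : ∀ t, f (1 - y t) < g (1 - y t)) :
    ∀ t, z (t + 1) < y (t + 1) := by
  have hstep : ∀ t, z t ≤ y t → z (t + 1) < y (t + 1) := by
    intro t hzy
    have hmono : g (1 - y t) ≤ g (1 - z t) :=
      hg (sub_nonneg.mpr (hy1 t)) (sub_nonneg.mpr (hzy.trans (hy1 t))) (by linarith)
    rw [hy, hz, exp_lt_exp, neg_lt_neg_iff]
    exact mul_lt_mul_of_pos_left ((hgap t).trans_le hmono) hc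
  have hle : ∀ t, z t ≤ y t := fun t => Nat.rec hzy0 (fun t ih => (hstep t ih).le) t
  exact fun t => hstep t (hle t)

theorem proposition1_comparison_general (k : ℕ) (a : ℕ → ℝ)
    (ha : ∀ j ∈ Finset.Icc 1 k, 0 ≤ a j)
    (d : ℕ) (hd2 : 2 ≤ d) (hdk : d ≤ k) (had : 0 < a d)
    (σ : ℝ) (hσ0 : 0 < σ) (hσ1 : σ ≤ 1) (c : ℝ) (hc : 0 < c)
    (P Q : ℝ → ℝ)
    (hP : ∀ x, P x = ∑ j ∈ Finset.Icc 1 k, (j : ℝ) * a j * x ^ (j - 1))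
    (hQ : ∀ x, Q x = P x + σ * a d - σ * (d : ℝ) * a d * x ^ (d - 1))
    (y z : ℕ → ℝ) (hy0 : y 0 = 1) (hz0 : z 0 = 1)
    (hy : ∀ t, y (t + 1) = Real.exp (-(c * P (1 - y t))))
    (hz : ∀ t, z (t + 1) = Real.exp (-(c * Q (1 - z t))))
    (hcrit : ∀ t, (d : ℝ) * (1 - y t) ^ (d - 1) < 1) :
    ∀ t, 1 ≤ t → z t < y t := by
  have hP_nonneg : ∀ x, 0 ≤ x → 0 ≤ P x := fun x hx => by
    rw [hP]
    exact sum_nonneg fun j hj => by have := ha j hj; positivity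
  have hQ_mono : MonotoneOn Q (Ici 0) := by
    have hmono := (monotoneOn_sum_sub_spike (Icc 1 k) ha (mem_Icc.mpr ⟨by omega, hdk⟩)
      (show σ * a d ≤ a d by nlinarith)).add_const (σ * a d)
    refine hmono.congr fun x _ => ?_
    simp only [hQ, hP]
    ring
  have hgap : ∀ t, P (1 - y t) < Q (1 - y t) := fun t => by
    rw [hQ]
    nlinarith [mul_pos (mul_pos hσ0 had) (sub_pos.mpr (hcrit t))]
  have hlt := iterate_lt_iterate hc hQ_mono (hz0.trans hy0.symm).le
    (iterate_le_one hc.le hP_nonneg hy0.le hy) hy hz hgap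
  intro t ht
  obtain ⟨s, rfl⟩ := Nat.exists_eq_add_of_le' ht
  exact hlt s

/-- Proposition 1 (comparison part): with `P(x) = ∑_{j=1}^{k} j·a_j·x^{j−1}`,
`Q_σ(x) = P(x) + σ·a_d − σ·d·a_d·x^{d−1}`, and And-Or tree iterations
`y₀ = z₀ = 1`, `y_{t+1} = exp(−c·P(1−y_t))`, `z_{t+1} = exp(−c·Q_σ(1−z_t))`,
if `d·(1−y_t)^{d−1} < 1` for every `t ≥ 0`, then `z_t < y_t` for every `t ≥ 1`. -/
theorem proposition1_comparison (k : ℕ) (hk : 2 ≤ k) (a : ℕ → ℝ)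
    (ha : ∀ j ∈ Finset.Icc 1 k, 0 ≤ a j)
    (d : ℕ) (hd2 : 2 ≤ d) (hdk : d ≤ k) (had : 0 < a d)
    (σ : ℝ) (hσ0 : 0 < σ) (hσ1 : σ ≤ 1) (c : ℝ) (hc : 0 < c)
    (P Q : ℝ → ℝ)
    (hP : ∀ x, P x = ∑ j ∈ Finset.Icc 1 k, (j : ℝ) * a j * x ^ (j - 1))
    (hQ : ∀ x, Q x = P x + σ * a d - σ * (d : ℝ) * a d * x ^ (d - 1))
    (y z : ℕ → ℝ) (hy0 : y 0 = 1) (hz0 : z 0 = 1)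
    (hy : ∀ t, y (t + 1) = Real.exp (-(c * P (1 - y t))))
    (hz : ∀ t, z (t + 1) = Real.exp (-(c * Q (1 - z t))))
    (hcrit : ∀ t, (d : ℝ) * (1 - y t) ^ (d - 1) < 1) :
    ∀ t, 1 ≤ t → z t < y t :=
  proposition1_comparison_general k a ha d hd2 hdk had σ hσ0 hσ1 c hc P Q hP hQ y z hy0 hz0 hy hz
    hcrit
end

section
/- (Proposition 1, optimality of σ = 1.) Let k ≥ 2, a_1,…,a_k ≥ 0, let d be an integer with 2 ≤ d ≤ k and a_d > 0, let 0 < σ ≤ σ' ≤ 1, and let c > 0. Define Q_σ(x) = ∑_{j=1}^{k} j·a_j·x^{j−1} + σ·a_d − σ·d·a_d·x^{d−1}, and sequences z₀^σ = z₀^{σ'} = 1, z_{t+1}^σ = exp(−c·Q_σ(1 − z_t^σ)), z_{t+1}^{σ'} = exp(−c·Q_{σ'}(1 − z_t^{σ'})). If d·(1 − z_t^σ)^{d−1} < 1 for every t ≥ 0, then z_t^{σ'} ≤ z_t^σ for every t ≥ 0; i.e., the bit error probability at every iteration is minimized over σ ∈ (0,1] by σ = 1. -/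
/-!
Moving the fraction `σ` of the degree-`d` mass to degree one changes `Q_σ(x)` by
`σ·a_d·(1 − d·x^{d−1})`, so under the hypothesis `d·(1 − z_t^σ)^{d−1} < 1` raising `σ` to `σ'`
can only raise `Q` at the points visited by the `σ`-iteration. Since `Q_{σ'}` is monotone on
`[0, ∞)` and `x ↦ exp(−c·x)` is decreasing, the comparison `z_t^{σ'} ≤ z_t^σ` propagates along
the iteration by induction.
-/

open Finset Real

section AndOrIteration

variable {c : ℝ} {f g : ℝ → ℝ} {z z' : ℕ → ℝ}

theorem andOr_iterate_le_one (hc : 0 ≤ c) (hf : ∀ x, 0 ≤ x → 0 ≤ f x) (h0 : z 0 ≤ 1)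
    (hz : ∀ t, z (t + 1) = exp (-(c * f (1 - z t)))) : ∀ t, z t ≤ 1
  | 0 => h0
  | t + 1 => by
    rw [hz, exp_le_one_iff, neg_nonpos]
    exact mul_nonneg hc (hf _ (sub_nonneg.mpr (andOr_iterate_le_one hc hf h0 hz t)))

theorem andOr_iterate_comparison (hc : 0 ≤ c) (hg : MonotoneOn g (Set.Ici 0)) (h0 : z' 0 ≤ z 0)
    (hz1 : ∀ t, z t ≤ 1) (hfg : ∀ t, f (1 - z t) ≤ g (1 - z t))
    (hz : ∀ t, z (t + 1) = exp (-(c * f (1 - z t))))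
    (hz' : ∀ t, z' (t + 1) = exp (-(c * g (1 - z' t)))) : ∀ t, z' t ≤ z t
  | 0 => h0
  | t + 1 => by
    have ih := andOr_iterate_comparison hc hg h0 hz1 hfg hz hz' t
    have hx : (0 : ℝ) ≤ 1 - z t := sub_nonneg.mpr (hz1 t)
    have hgx : g (1 - z t) ≤ g (1 - z' t) := hg hx (hx.trans (by linarith)) (by linarith)
    rw [hz, hz', exp_le_exp, neg_le_neg_iff]
    exact mul_le_mul_of_nonneg_left ((hfg t).trans hgx) hc

end AndOrIteration

noncomputable def spikeDeriv (k : ℕ) (a : ℕ → ℝ) (d : ℕ) (s x : ℝ) : ℝ :=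
  (∑ j ∈ Icc 1 k, (j : ℝ) * a j * x ^ (j - 1)) + s * a d - s * (d : ℝ) * a d * x ^ (d - 1)

section SpikeDeriv

variable {k d : ℕ} {a : ℕ → ℝ} {s s' x : ℝ}

theorem spikeDeriv_eq_sum_erase (hd : d ∈ Icc 1 k) :
    spikeDeriv k a d s x = (∑ j ∈ (Icc 1 k).erase d, (j : ℝ) * a j * x ^ (j - 1))
      + (1 - s) * d * a d * x ^ (d - 1) + s * a d := by
  rw [spikeDeriv, ← add_sum_erase _ _ hd]
  ring

variable (ha : ∀ j ∈ Icc 1 k, 0 ≤ a j) (hd : d ∈ Icc 1 k)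
include ha hd

theorem spikeDeriv_nonneg (hs0 : 0 ≤ s) (hs1 : s ≤ 1) (hx : 0 ≤ x) :
    0 ≤ spikeDeriv k a d s x := by
  rw [spikeDeriv_eq_sum_erase hd]
  have hsum : 0 ≤ ∑ j ∈ (Icc 1 k).erase d, (j : ℝ) * a j * x ^ (j - 1) :=
    sum_nonneg fun j hj => by have := ha j (mem_of_mem_erase hj); positivity
  have := ha d hd
  have : 0 ≤ 1 - s := sub_nonneg.mpr hs1
  positivity

theorem spikeDeriv_monotoneOn (hs1 : s ≤ 1) : MonotoneOn (spikeDeriv k a d s) (Set.Ici 0) := by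
  intro x hx y _ hxy
  simp only [spikeDeriv_eq_sum_erase hd]
  have := ha d hd
  have : 0 ≤ 1 - s := sub_nonneg.mpr hs1
  gcongr with j hj
  exact mul_nonneg j.cast_nonneg (ha j (mem_of_mem_erase hj))

theorem spikeDeriv_le_spikeDeriv (hss' : s ≤ s') (hcrit : (d : ℝ) * x ^ (d - 1) ≤ 1) :
    spikeDeriv k a d s x ≤ spikeDeriv k a d s' x := by
  have hdiff : spikeDeriv k a d s' x - spikeDeriv k a d s x
      = (s' - s) * (a d * (1 - d * x ^ (d - 1))) := by
    simp only [spikeDeriv]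
    ring
  have : 0 ≤ (s' - s) * (a d * (1 - d * x ^ (d - 1))) :=
    mul_nonneg (sub_nonneg.mpr hss') (mul_nonneg (ha d hd) (sub_nonneg.mpr hcrit))
  linarith

end SpikeDeriv

theorem proposition1_optimality_general (k : ℕ) (a : ℕ → ℝ)
    (ha : ∀ j ∈ Finset.Icc 1 k, 0 ≤ a j)
    (d : ℕ) (hd2 : 2 ≤ d) (hdk : d ≤ k)
    (σ σ' : ℝ) (hσ0 : 0 < σ) (hσσ' : σ ≤ σ') (hσ'1 : σ' ≤ 1) (c : ℝ) (hc : 0 < c)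
    (Q : ℝ → ℝ → ℝ)
    (hQ : ∀ s x, Q s x = (∑ j ∈ Finset.Icc 1 k, (j : ℝ) * a j * x ^ (j - 1))
        + s * a d - s * (d : ℝ) * a d * x ^ (d - 1))
    (zσ zσ' : ℕ → ℝ) (hzσ0 : zσ 0 = 1) (hzσ'0 : zσ' 0 = 1)
    (hzσ : ∀ t, zσ (t + 1) = Real.exp (-(c * Q σ (1 - zσ t))))
    (hzσ' : ∀ t, zσ' (t + 1) = Real.exp (-(c * Q σ' (1 - zσ' t))))
    (hcrit : ∀ t, (d : ℝ) * (1 - zσ t) ^ (d - 1) < 1) :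
    ∀ t, zσ' t ≤ zσ t := by
  have hd : d ∈ Icc 1 k := mem_Icc.mpr ⟨by omega, hdk⟩
  obtain rfl : Q = spikeDeriv k a d := funext₂ hQ
  have hzσ_le_one : ∀ t, zσ t ≤ 1 :=
    andOr_iterate_le_one hc.le
      (fun _ hx => spikeDeriv_nonneg ha hd hσ0.le (hσσ'.trans hσ'1) hx) hzσ0.le hzσ
  exact andOr_iterate_comparison hc.le (spikeDeriv_monotoneOn ha hd hσ'1)
    (hzσ'0.trans hzσ0.symm).le hzσ_le_one
    (fun t => spikeDeriv_le_spikeDeriv ha hd hσσ' (hcrit t).le) hzσ hzσ'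

/-- Proposition 1 (optimality of `σ = 1`): with
`Q_σ(x) = ∑_{j=1}^{k} j·a_j·x^{j−1} + σ·a_d − σ·d·a_d·x^{d−1}` and And-Or tree
iterations `z₀^σ = z₀^{σ'} = 1`, `z_{t+1}^σ = exp(−c·Q_σ(1−z_t^σ))`,
`z_{t+1}^{σ'} = exp(−c·Q_{σ'}(1−z_t^{σ'}))` for `0 < σ ≤ σ' ≤ 1`, if
`d·(1−z_t^σ)^{d−1} < 1` for every `t`, then `z_t^{σ'} ≤ z_t^σ` for every `t`; in
particular the bit error probability at every iteration is minimized by `σ = 1`. -/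
theorem proposition1_optimality (k : ℕ) (hk : 2 ≤ k) (a : ℕ → ℝ)
    (ha : ∀ j ∈ Finset.Icc 1 k, 0 ≤ a j)
    (d : ℕ) (hd2 : 2 ≤ d) (hdk : d ≤ k) (had : 0 < a d)
    (σ σ' : ℝ) (hσ0 : 0 < σ) (hσσ' : σ ≤ σ') (hσ'1 : σ' ≤ 1) (c : ℝ) (hc : 0 < c)
    (Q : ℝ → ℝ → ℝ)
    (hQ : ∀ s x, Q s x = (∑ j ∈ Finset.Icc 1 k, (j : ℝ) * a j * x ^ (j - 1))
        + s * a d - s * (d : ℝ) * a d * x ^ (d - 1))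
    (zσ zσ' : ℕ → ℝ) (hzσ0 : zσ 0 = 1) (hzσ'0 : zσ' 0 = 1)
    (hzσ : ∀ t, zσ (t + 1) = Real.exp (-(c * Q σ (1 - zσ t))))
    (hzσ' : ∀ t, zσ' (t + 1) = Real.exp (-(c * Q σ' (1 - zσ' t))))
    (hcrit : ∀ t, (d : ℝ) * (1 - zσ t) ^ (d - 1) < 1) :
    ∀ t, zσ' t ≤ zσ t :=
  proposition1_optimality_general k a ha d hd2 hdk σ σ' hσ0 hσσ' hσ'1 c hc Q hQ zσ zσ' hzσ0 hzσ'0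
    hzσ hzσ' hcrit
end

section
/- (Limit version of Proposition 1.) Under the hypotheses of the comparison part of Proposition 1 — k ≥ 2, a_1,…,a_k ≥ 0, integer d with 2 ≤ d ≤ k and a_d > 0, σ ∈ (0,1], c > 0, P(x) = ∑_{j=1}^{k} j·a_j·x^{j−1}, Q_σ(x) = P(x) + σ·a_d − σ·d·a_d·x^{d−1}, sequences y₀ = z₀ = 1, y_{t+1} = exp(−c·P(1 − y_t)), z_{t+1} = exp(−c·Q_σ(1 − z_t)), and d·(1 − y_t)^{d−1} < 1 for all t — both sequences converge, their limits y* and z* satisfy the respective fixed-point equations y* = exp(−c·P(1 − y*)) and z* = exp(−c·Q_σ(1 − z*)), and z* ≤ y*. -/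
/-!
Both iterations are instances of `y ↦ exp (-(c f (1 - y)))` with `f` nonnegative and monotone on
`[0, ∞)`, so starting from `1` they decrease, stay positive, and converge to a fixed point.
For the comparison, moving spike mass lowers the degree-`d` term of the derivative, but `P` grows
at least as fast as its degree-`d` term, so for `0 ≤ s ≤ u` one gets
`Q_σ u - P s ≥ σ a_d (1 - d s^(d-1))`, which is nonnegative under the hypothesis on `y`.
Inductively `z_t ≤ y_t`, and the inequality passes to the limits.
-/

open Filter Finset Topology

noncomputable section

/-- The derivative `P` of the check-node degree distribution. -/
def checkDeriv (k : ℕ) (a : ℕ → ℝ) (x : ℝ) : ℝ :=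
  ∑ j ∈ Icc 1 k, (j : ℝ) * a j * x ^ (j - 1)

/-- The derivative `Q_σ` after moving the fraction `σ` of the degree-`d` mass to degree `1`. -/
def improvedCheckDeriv (k : ℕ) (a : ℕ → ℝ) (d : ℕ) (σ x : ℝ) : ℝ :=
  checkDeriv k a x + σ * a d - σ * d * a d * x ^ (d - 1)

end

section CheckDeriv

variable {k : ℕ} {a : ℕ → ℝ} (ha : ∀ j ∈ Icc 1 k, 0 ≤ a j)
include ha

theorem checkDeriv_nonneg {x : ℝ} (hx : 0 ≤ x) : 0 ≤ checkDeriv k a x :=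
  sum_nonneg fun j hj => by have := ha j hj; positivity

theorem checkDeriv_monotoneOn : MonotoneOn (checkDeriv k a) (Set.Ici 0) := fun _ hs _ _ hsu =>
  sum_le_sum fun j hj =>
    mul_le_mul_of_nonneg_left (pow_le_pow_left₀ hs hsu _) (mul_nonneg j.cast_nonneg (ha j hj))

theorem mul_sub_le_checkDeriv_sub {d : ℕ} (hd : d ∈ Icc 1 k) {s u : ℝ} (hs : 0 ≤ s)
    (hsu : s ≤ u) :
    d * a d * (u ^ (d - 1) - s ^ (d - 1)) ≤ checkDeriv k a u - checkDeriv k a s := by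
  have hterm : ∀ j ∈ Icc 1 k, 0 ≤ (j : ℝ) * a j * u ^ (j - 1) - j * a j * s ^ (j - 1) :=
    fun j hj => sub_nonneg.2 <|
      mul_le_mul_of_nonneg_left (pow_le_pow_left₀ hs hsu _) (mul_nonneg j.cast_nonneg (ha j hj))
  have := single_le_sum hterm hd
  rw [sum_sub_distrib] at this
  unfold checkDeriv
  linarith

variable {d : ℕ} (hd : d ∈ Icc 1 k) (had : 0 ≤ a d) {σ : ℝ} (hσ0 : 0 ≤ σ) (hσ1 : σ ≤ 1)
include hd had hσ1

theorem mul_spike_le_checkDeriv_sub {s u : ℝ} (hs : 0 ≤ s) (hsu : s ≤ u) :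
    σ * (d * a d * (u ^ (d - 1) - s ^ (d - 1))) ≤ checkDeriv k a u - checkDeriv k a s := by
  have hpow : s ^ (d - 1) ≤ u ^ (d - 1) := by gcongr
  have : 0 ≤ d * a d * (u ^ (d - 1) - s ^ (d - 1)) := by
    have : 0 ≤ u ^ (d - 1) - s ^ (d - 1) := by linarith
    positivity
  exact (mul_le_of_le_one_left this hσ1).trans (mul_sub_le_checkDeriv_sub ha hd hs hsu)

theorem improvedCheckDeriv_monotoneOn :
    MonotoneOn (improvedCheckDeriv k a d σ) (Set.Ici 0) := fun s hs _ _ hsu => by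
  have := mul_spike_le_checkDeriv_sub ha hd had hσ1 hs hsu
  unfold improvedCheckDeriv
  linarith

include hσ0 in
theorem checkDeriv_le_improvedCheckDeriv {s u : ℝ} (hs : 0 ≤ s) (hsu : s ≤ u)
    (hcrit : d * s ^ (d - 1) ≤ 1) :
    checkDeriv k a s ≤ improvedCheckDeriv k a d σ u := by
  have := mul_spike_le_checkDeriv_sub ha hd had hσ1 hs hsu
  have : 0 ≤ σ * a d * (1 - d * s ^ (d - 1)) := by
    have : 0 ≤ 1 - d * s ^ (d - 1) := by linarith
    positivity
  unfold improvedCheckDeriv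
  linarith

include hσ0 in
theorem improvedCheckDeriv_nonneg {x : ℝ} (hx : 0 ≤ x) : 0 ≤ improvedCheckDeriv k a d σ x := by
  have hcrit : (d : ℝ) * 0 ^ (d - 1) ≤ 1 := by
    rcases Nat.eq_zero_or_pos (d - 1) with h | h
    · have : d = 1 := by have := (mem_Icc.1 hd).1; omega
      simp [this]
    · simp [zero_pow h.ne']
  exact (checkDeriv_nonneg ha le_rfl).trans
    (checkDeriv_le_improvedCheckDeriv ha hd had hσ0 hσ1 le_rfl hx hcrit)

end CheckDeriv

section AndOrIteration

variable {c : ℝ} (hc : 0 ≤ c) {f g : ℝ → ℝ} {y z : ℕ → ℝ}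

include hc in
theorem andOr_mem_Ioc (hf : ∀ x, 0 ≤ x → 0 ≤ f x) (hy0 : y 0 = 1)
    (hy : ∀ t, y (t + 1) = Real.exp (-(c * f (1 - y t)))) (t : ℕ) : y t ∈ Set.Ioc 0 1 := by
  induction t with
  | zero => simp [hy0]
  | succ t ih =>
    rw [hy t]
    have := hf _ (sub_nonneg.2 ih.2)
    exact ⟨Real.exp_pos _, Real.exp_le_one_iff.2 (by nlinarith)⟩

include hc in
theorem andOr_le_of_le (h0 : z 0 ≤ y 0)
    (hy : ∀ t, y (t + 1) = Real.exp (-(c * f (1 - y t))))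
    (hz : ∀ t, z (t + 1) = Real.exp (-(c * g (1 - z t))))
    (hfg : ∀ t, z t ≤ y t → f (1 - y t) ≤ g (1 - z t)) (t : ℕ) : z t ≤ y t := by
  induction t with
  | zero => exact h0
  | succ t ih =>
    rw [hy, hz, Real.exp_le_exp, neg_le_neg_iff]
    exact mul_le_mul_of_nonneg_left (hfg t ih) hc

theorem Antitone.exists_tendsto_fixedPoint (hanti : Antitone y) {F : ℝ → ℝ} (hF : Continuous F)
    (hbdd : BddBelow (Set.range y)) (hy : ∀ t, y (t + 1) = F (y t)) :
    ∃ L, Tendsto y atTop (𝓝 L) ∧ L = F L := by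
  have hT := tendsto_atTop_ciInf hanti hbdd
  have hshift := hT.comp (tendsto_add_atTop_nat 1)
  simp only [Function.comp_def, hy] at hshift
  exact ⟨_, hT, tendsto_nhds_unique hshift ((hF.tendsto _).comp hT)⟩

include hc in
theorem andOr_exists_tendsto_fixedPoint (hf : ∀ x, 0 ≤ x → 0 ≤ f x)
    (hmono : MonotoneOn f (Set.Ici 0)) (hcont : Continuous f) (hy0 : y 0 = 1)
    (hy : ∀ t, y (t + 1) = Real.exp (-(c * f (1 - y t)))) :
    ∃ L, Tendsto y atTop (𝓝 L) ∧ L = Real.exp (-(c * f (1 - L))) := by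
  have hIoc := andOr_mem_Ioc hc hf hy0 hy
  -- `t ↦ y (t + 1)` is itself an iteration of the same map, started below `y 0 = 1`
  have hanti : Antitone y := antitone_nat_of_succ_le <|
    andOr_le_of_le hc (by rw [hy0]; exact (hIoc 1).2) hy (fun t => hy (t + 1))
      fun t ht => hmono (sub_nonneg.2 (hIoc t).2) (sub_nonneg.2 (hIoc (t + 1)).2) (by linarith)
  exact hanti.exists_tendsto_fixedPoint (by fun_prop)
    ⟨0, Set.forall_mem_range.2 fun t => (hIoc t).1.le⟩ hy

end AndOrIteration

theorem proposition1_limit_general (k : ℕ) (a : ℕ → ℝ)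
    (ha : ∀ j ∈ Finset.Icc 1 k, 0 ≤ a j)
    (d : ℕ) (hd2 : 2 ≤ d) (hdk : d ≤ k) (had : 0 < a d)
    (σ : ℝ) (hσ0 : 0 < σ) (hσ1 : σ ≤ 1) (c : ℝ) (hc : 0 < c)
    (P Q : ℝ → ℝ)
    (hP : ∀ x, P x = ∑ j ∈ Finset.Icc 1 k, (j : ℝ) * a j * x ^ (j - 1))
    (hQ : ∀ x, Q x = P x + σ * a d - σ * (d : ℝ) * a d * x ^ (d - 1))
    (y z : ℕ → ℝ) (hy0 : y 0 = 1) (hz0 : z 0 = 1)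
    (hy : ∀ t, y (t + 1) = Real.exp (-(c * P (1 - y t))))
    (hz : ∀ t, z (t + 1) = Real.exp (-(c * Q (1 - z t))))
    (hcrit : ∀ t, (d : ℝ) * (1 - y t) ^ (d - 1) < 1) :
    ∃ ystar zstar : ℝ,
      Tendsto y atTop (nhds ystar) ∧ Tendsto z atTop (nhds zstar) ∧
      ystar = Real.exp (-(c * P (1 - ystar))) ∧
      zstar = Real.exp (-(c * Q (1 - zstar))) ∧
      zstar ≤ ystar := by
  obtain rfl : P = checkDeriv k a := funext hP
  obtain rfl : Q = improvedCheckDeriv k a d σ := funext hQ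
  have hd : d ∈ Icc 1 k := mem_Icc.2 ⟨by omega, hdk⟩
  obtain ⟨ystar, hyT, hyfix⟩ := andOr_exists_tendsto_fixedPoint hc.le
    (fun _ => checkDeriv_nonneg ha) (checkDeriv_monotoneOn ha)
    (by unfold checkDeriv; fun_prop) hy0 hy
  obtain ⟨zstar, hzT, hzfix⟩ := andOr_exists_tendsto_fixedPoint hc.le
    (fun _ => improvedCheckDeriv_nonneg ha hd had.le hσ0.le hσ1)
    (improvedCheckDeriv_monotoneOn ha hd had.le hσ1)
    (by unfold improvedCheckDeriv checkDeriv; fun_prop) hz0 hz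
  have hzy : ∀ t, z t ≤ y t := andOr_le_of_le hc.le (by rw [hy0, hz0]) hy hz fun t ht =>
    checkDeriv_le_improvedCheckDeriv ha hd had.le hσ0.le hσ1
      (sub_nonneg.2 (andOr_mem_Ioc hc.le (fun _ => checkDeriv_nonneg ha) hy0 hy t).2)
      (by linarith) (hcrit t).le
  exact ⟨ystar, zstar, hyT, hzT, hyfix, hzfix, le_of_tendsto_of_tendsto' hzT hyT hzy⟩

/-- Limit version of Proposition 1: under the hypotheses of the comparison part, both
And-Or tree iterations converge, the limits `y*` and `z*` satisfy the respective
fixed-point equations, and `z* ≤ y*`. -/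
theorem proposition1_limit (k : ℕ) (hk : 2 ≤ k) (a : ℕ → ℝ)
    (ha : ∀ j ∈ Finset.Icc 1 k, 0 ≤ a j)
    (d : ℕ) (hd2 : 2 ≤ d) (hdk : d ≤ k) (had : 0 < a d)
    (σ : ℝ) (hσ0 : 0 < σ) (hσ1 : σ ≤ 1) (c : ℝ) (hc : 0 < c)
    (P Q : ℝ → ℝ)
    (hP : ∀ x, P x = ∑ j ∈ Finset.Icc 1 k, (j : ℝ) * a j * x ^ (j - 1))
    (hQ : ∀ x, Q x = P x + σ * a d - σ * (d : ℝ) * a d * x ^ (d - 1))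
    (y z : ℕ → ℝ) (hy0 : y 0 = 1) (hz0 : z 0 = 1)
    (hy : ∀ t, y (t + 1) = Real.exp (-(c * P (1 - y t))))
    (hz : ∀ t, z (t + 1) = Real.exp (-(c * Q (1 - z t))))
    (hcrit : ∀ t, (d : ℝ) * (1 - y t) ^ (d - 1) < 1) :
    ∃ ystar zstar : ℝ,
      Tendsto y atTop (nhds ystar) ∧ Tendsto z atTop (nhds zstar) ∧
      ystar = Real.exp (-(c * P (1 - ystar))) ∧
      zstar = Real.exp (-(c * Q (1 - zstar))) ∧
      zstar ≤ ystar :=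
  proposition1_limit_general k a ha d hd2 hdk had σ hσ0 hσ1 c hc P Q hP hQ y z hy0 hz0 hy hz hcrit
end
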